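/- arXiv:1402.5040 — 2 statements merged into one kernel-verified Lean document; each statement's English description precedes it below -/
import Mathlib

section
/- For every integer n ≥ 1, every k with 0 ≤ k ≤ n, and every continuous function f : [0,1] → ℝ, one has lim_{ρ→∞} F_{n,k}^ρ(f) = f(k/n). -/
/-!
For `0 < k < n`, `F_{n,k}^ρ(f)` is the mean of `f` under the Beta distribution with parameters
`(x₀ s, (1 - x₀) s)`, where `x₀ = k/n` and `s = nρ`. From `B(a+1,b) = a/(a+b) · B(a,b)` this
distribution has mean `x₀` and variance `x₀(1 - x₀)/(s + 1)`. Continuity of `f` on `[0,1]` gives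
`|f t - f x₀| ≤ ε + C (t - x₀)²`, so the mean of `f` lies within `ε + C x₀(1 - x₀)/(s + 1)` of
`f x₀`, and this tends to `ε` as `ρ → ∞`.
-/

open MeasureTheory

noncomputable def betaFn (a b : ℝ) : ℝ :=
  ∫ t in (0:ℝ)..1, t ^ (a - 1) * (1 - t) ^ (b - 1)

/-- The functionals `F_{n,k}^ρ`. -/
noncomputable def Ffun (n k : ℕ) (ρ : ℝ) (f : ℝ → ℝ) : ℝ :=
  if k = 0 then f 0
  else if k = n then f 1
  else (betaFn ((k : ℝ) * ρ) (((n : ℝ) - (k : ℝ)) * ρ))⁻¹ *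
    ∫ t in (0:ℝ)..1, t ^ ((k : ℝ) * ρ - 1) * (1 - t) ^ (((n : ℝ) - (k : ℝ)) * ρ - 1) * f t

/-- Bernstein basis polynomial `p_{n,k}(x)`. -/
noncomputable def bern (n k : ℕ) (x : ℝ) : ℝ :=
  (n.choose k : ℝ) * x ^ k * (1 - x) ^ (n - k)

/-- The operator `U_n^ρ`. -/
noncomputable def Uop (n : ℕ) (ρ : ℝ) (f : ℝ → ℝ) (x : ℝ) : ℝ :=
  ∑ k ∈ Finset.range (n + 1), Ffun n k ρ f * bern n k x

open Set Filter Topology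

theorem ContinuousOn.exists_abs_sub_le_add_mul_sq {g : ℝ → ℝ} {s : Set ℝ} (hs : IsCompact s)
    (hg : ContinuousOn g s) {x₀ : ℝ} (hx₀ : x₀ ∈ s) {ε : ℝ} (hε : 0 < ε) :
    ∃ C, ∀ t ∈ s, |g t - g x₀| ≤ ε + C * (t - x₀) ^ 2 := by
  obtain ⟨M, hM⟩ := hs.exists_bound_of_continuousOn hg
  obtain ⟨δ, hδ, hnear⟩ := Metric.continuousWithinAt_iff.mp (hg x₀ hx₀) ε hε
  have hM0 : 0 ≤ M := (norm_nonneg _).trans (hM x₀ hx₀)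
  refine ⟨2 * M / δ ^ 2, fun t ht => ?_⟩
  have hC : 0 ≤ 2 * M / δ ^ 2 := by positivity
  rcases lt_or_ge |t - x₀| δ with hclose | hfar
  · have := hnear ht (by rwa [Real.dist_eq])
    rw [Real.dist_eq] at this
    nlinarith [mul_nonneg hC (sq_nonneg (t - x₀))]
  -- far from `x₀`, the crude bound `2M` is absorbed by `C (t - x₀)² ≥ C δ² = 2M`
  · have hbound : |g t - g x₀| ≤ 2 * M := by
      have := norm_sub_le (g t) (g x₀)
      rw [Real.norm_eq_abs (g t - g x₀)] at this
      linarith [hM t ht, hM x₀ hx₀]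
    have hδsq : δ ^ 2 ≤ (t - x₀) ^ 2 := by
      rw [← sq_abs (t - x₀)]; gcongr
    calc |g t - g x₀| ≤ 2 * M / δ ^ 2 * δ ^ 2 := by field_simp; exact hbound
      _ ≤ ε + 2 * M / δ ^ 2 * (t - x₀) ^ 2 := by nlinarith

/-- The density of the Beta distribution `B(a,b)`, up to the normalising factor `betaFn a b`. -/
noncomputable def betaWeight (a b t : ℝ) : ℝ := t ^ (a - 1) * (1 - t) ^ (b - 1)

noncomputable def betaMean (a b : ℝ) (g : ℝ → ℝ) : ℝ :=
  (betaFn a b)⁻¹ * ∫ t in (0:ℝ)..1, betaWeight a b t * g t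

section Beta

variable {a b t : ℝ}

theorem integral_betaWeight : ∫ t in (0:ℝ)..1, betaWeight a b t = betaFn a b := rfl

theorem betaWeight_nonneg (ht : t ∈ Icc (0:ℝ) 1) : 0 ≤ betaWeight a b t :=
  mul_nonneg (Real.rpow_nonneg ht.1 _) (Real.rpow_nonneg (sub_nonneg.mpr ht.2) _)

theorem betaWeight_add_one_left (ha : a ≠ 0) (ht : 0 ≤ t) :
    betaWeight (a + 1) b t = betaWeight a b t * t := by
  rw [betaWeight, betaWeight, show a + 1 - 1 = a - 1 + 1 by ring,
    Real.rpow_add_one' ht (by simpa using ha)]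
  ring

theorem ofReal_betaWeight (ht : t ∈ Icc (0:ℝ) 1) :
    (betaWeight a b t : ℂ) = (t : ℂ) ^ ((a : ℂ) - 1) * (1 - (t : ℂ)) ^ ((b : ℂ) - 1) := by
  rw [betaWeight, Complex.ofReal_mul, Complex.ofReal_cpow ht.1,
    Complex.ofReal_cpow (sub_nonneg.mpr ht.2)]
  push_cast
  ring

theorem ofReal_betaFn : (betaFn a b : ℂ) = Complex.betaIntegral a b := by
  rw [← integral_betaWeight, ← intervalIntegral.integral_ofReal, Complex.betaIntegral]
  refine intervalIntegral.integral_congr fun t ht => ?_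
  rw [uIcc_of_le zero_le_one] at ht
  exact ofReal_betaWeight ht

theorem intervalIntegrable_betaWeight (ha : 0 < a) (hb : 0 < b) :
    IntervalIntegrable (betaWeight a b) volume 0 1 := by
  have h := Complex.betaIntegral_convergent (u := a) (v := b) (by simpa) (by simpa)
  rw [intervalIntegrable_iff, uIoc_of_le zero_le_one] at h ⊢
  refine h.re.congr ?_
  filter_upwards [self_mem_ae_restrict measurableSet_Ioc] with t ht
  rw [← ofReal_betaWeight (Ioc_subset_Icc_self ht), RCLike.re_to_complex, Complex.ofReal_re]

theorem intervalIntegrable_betaWeight_mul (ha : 0 < a) (hb : 0 < b) {g : ℝ → ℝ}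
    (hg : ContinuousOn g (Icc 0 1)) :
    IntervalIntegrable (fun t => betaWeight a b t * g t) volume 0 1 :=
  (intervalIntegrable_betaWeight ha hb).mul_continuousOn (by rwa [uIcc_of_le zero_le_one])

theorem betaFn_eq_beta (ha : 0 < a) (hb : 0 < b) : betaFn a b = ProbabilityTheory.beta a b := by
  rw [ProbabilityTheory.beta_eq_betaIntegralReal a b ha hb, ← ofReal_betaFn, Complex.ofReal_re]

theorem betaFn_pos (ha : 0 < a) (hb : 0 < b) : 0 < betaFn a b :=
  betaFn_eq_beta ha hb ▸ ProbabilityTheory.beta_pos ha hb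

theorem betaFn_add_one_left (ha : 0 < a) (hb : 0 < b) :
    betaFn (a + 1) b = a / (a + b) * betaFn a b := by
  rw [betaFn_eq_beta (by linarith) hb, betaFn_eq_beta ha hb, ProbabilityTheory.beta,
    ProbabilityTheory.beta, add_right_comm, Real.Gamma_add_one ha.ne',
    Real.Gamma_add_one (by positivity)]
  have := Real.Gamma_pos_of_pos (add_pos ha hb)
  field_simp

theorem betaMean_const_mul (c : ℝ) (g : ℝ → ℝ) :
    betaMean a b (fun t => c * g t) = c * betaMean a b g := by
  simp only [betaMean, mul_left_comm _ c, intervalIntegral.integral_const_mul]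

theorem betaMean_const (ha : 0 < a) (hb : 0 < b) (c : ℝ) : betaMean a b (fun _ => c) = c := by
  rw [betaMean, intervalIntegral.integral_mul_const, integral_betaWeight]
  field_simp [(betaFn_pos ha hb).ne']

theorem betaMean_add_const (ha : 0 < a) (hb : 0 < b) {g : ℝ → ℝ}
    (hg : ContinuousOn g (Icc 0 1)) (c : ℝ) :
    betaMean a b (fun t => g t + c) = betaMean a b g + c := by
  simp only [betaMean, mul_add]
  rw [intervalIntegral.integral_add (intervalIntegrable_betaWeight_mul ha hb hg)
    ((intervalIntegrable_betaWeight ha hb).mul_const c), intervalIntegral.integral_mul_const,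
    integral_betaWeight, mul_add, ← mul_assoc, inv_mul_cancel₀ (betaFn_pos ha hb).ne', one_mul]

theorem betaMean_id_mul (ha : 0 < a) (hb : 0 < b) (g : ℝ → ℝ) :
    betaMean a b (fun t => t * g t) = a / (a + b) * betaMean (a + 1) b g := by
  have hweight : ∫ t in (0:ℝ)..1, betaWeight a b t * (t * g t)
      = ∫ t in (0:ℝ)..1, betaWeight (a + 1) b t * g t := by
    refine intervalIntegral.integral_congr fun t ht => ?_
    rw [uIcc_of_le zero_le_one] at ht
    simp only [betaWeight_add_one_left ha.ne' ht.1, mul_assoc]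
  rw [betaMean, betaMean, hweight, betaFn_add_one_left ha hb]
  have := betaFn_pos ha hb
  field_simp

theorem betaMean_id (ha : 0 < a) (hb : 0 < b) : betaMean a b (fun t => t) = a / (a + b) := by
  simpa [betaMean_const (by linarith : 0 < a + 1) hb] using betaMean_id_mul ha hb (fun _ => 1)

theorem betaMean_sq_sub_mean (ha : 0 < a) (hb : 0 < b) :
    betaMean a b (fun t => (t - a / (a + b)) ^ 2) = a * b / ((a + b) ^ 2 * (a + b + 1)) := by
  set m := a / (a + b) with hm
  calc betaMean a b (fun t => (t - m) ^ 2)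
      = betaMean a b (fun t => t * (t + -2 * m) + m ^ 2) := by congr; ext; ring
    _ = m * betaMean (a + 1) b (fun t => t + -2 * m) + m ^ 2 := by
      rw [betaMean_add_const ha hb (by fun_prop), betaMean_id_mul ha hb]
    _ = m * ((a + 1) / (a + 1 + b) + -2 * m) + m ^ 2 := by
      rw [betaMean_add_const (g := fun t => t) (by linarith) hb continuousOn_id,
        betaMean_id (by linarith) hb]
    _ = a * b / ((a + b) ^ 2 * (a + b + 1)) := by
      rw [hm, add_right_comm a 1 b]
      field_simp
      ring

theorem abs_betaMean_le (ha : 0 < a) (hb : 0 < b) {g h : ℝ → ℝ}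
    (hg : ContinuousOn g (Icc 0 1)) (hh : ContinuousOn h (Icc 0 1))
    (hgh : ∀ t ∈ Icc (0:ℝ) 1, |g t| ≤ h t) : |betaMean a b g| ≤ betaMean a b h := by
  have hB := betaFn_pos ha hb
  rw [betaMean, betaMean, abs_mul, abs_inv, abs_of_pos hB]
  gcongr
  refine (intervalIntegral.abs_integral_le_integral_abs zero_le_one).trans
    (intervalIntegral.integral_mono_on zero_le_one
      (intervalIntegrable_betaWeight_mul ha hb hg).abs (intervalIntegrable_betaWeight_mul ha hb hh)
      fun t ht => ?_)
  rw [abs_mul, abs_of_nonneg (betaWeight_nonneg ht)]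
  exact mul_le_mul_of_nonneg_left (hgh t ht) (betaWeight_nonneg ht)

theorem abs_betaMean_sub_le (ha : 0 < a) (hb : 0 < b) {g : ℝ → ℝ}
    (hg : ContinuousOn g (Icc 0 1)) {x₀ ε C : ℝ}
    (hC : ∀ t ∈ Icc (0:ℝ) 1, |g t - g x₀| ≤ ε + C * (t - x₀) ^ 2) :
    |betaMean a b g - g x₀| ≤ ε + C * betaMean a b (fun t => (t - x₀) ^ 2) := by
  calc |betaMean a b g - g x₀| = |betaMean a b (fun t => g t + -g x₀)| := by
        rw [betaMean_add_const ha hb hg, sub_eq_add_neg]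
    _ ≤ betaMean a b (fun t => C * (t - x₀) ^ 2 + ε) :=
        abs_betaMean_le ha hb (by fun_prop) (by fun_prop) fun t ht => by
          rw [← sub_eq_add_neg]; linarith [hC t ht]
    _ = ε + C * betaMean a b (fun t => (t - x₀) ^ 2) := by
        rw [betaMean_add_const ha hb (by fun_prop), betaMean_const_mul, add_comm]

theorem betaMean_mul_sq_sub {x₀ s : ℝ} (hx₀ : x₀ ∈ Ioo 0 1) (hs : 0 < s) :
    betaMean (x₀ * s) ((1 - x₀) * s) (fun t => (t - x₀) ^ 2) = x₀ * (1 - x₀) / (s + 1) := by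
  have ha : 0 < x₀ * s := mul_pos hx₀.1 hs
  have hb : 0 < (1 - x₀) * s := mul_pos (sub_pos.mpr hx₀.2) hs
  have hsum : x₀ * s + (1 - x₀) * s = s := by ring
  have hmean : x₀ * s / (x₀ * s + (1 - x₀) * s) = x₀ := by rw [hsum]; field_simp
  have := betaMean_sq_sub_mean ha hb
  rw [hmean, hsum] at this
  rw [this]
  field_simp

theorem tendsto_betaMean_mul_atTop {x₀ : ℝ} (hx₀ : x₀ ∈ Ioo 0 1) {g : ℝ → ℝ}
    (hg : ContinuousOn g (Icc 0 1)) :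
    Tendsto (fun s => betaMean (x₀ * s) ((1 - x₀) * s) g) atTop (𝓝 (g x₀)) := by
  refine Metric.tendsto_nhds.mpr fun ε hε => ?_
  obtain ⟨C, hC⟩ := hg.exists_abs_sub_le_add_mul_sq isCompact_Icc (Ioo_subset_Icc_self hx₀)
    (half_pos hε)
  have hvar : Tendsto (fun s => C * (x₀ * (1 - x₀) / (s + 1))) atTop (𝓝 0) := by
    simpa using
      (tendsto_const_nhds.div_atTop (tendsto_atTop_add_const_right _ 1 tendsto_id)).const_mul C
  filter_upwards [eventually_gt_atTop 0, hvar.eventually (gt_mem_nhds (half_pos hε))]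
    with s hs hsmall
  have ha : 0 < x₀ * s := mul_pos hx₀.1 hs
  have hb : 0 < (1 - x₀) * s := mul_pos (sub_pos.mpr hx₀.2) hs
  have := abs_betaMean_sub_le ha hb hg hC
  rw [betaMean_mul_sq_sub hx₀ hs] at this
  rw [Real.dist_eq]
  linarith

end Beta

theorem Ffun_eq_betaMean {n k : ℕ} (hk0 : k ≠ 0) (hkn : k ≠ n) (hn : (n : ℝ) ≠ 0) (ρ : ℝ)
    (f : ℝ → ℝ) :
    Ffun n k ρ f = betaMean (k / n * (n * ρ)) ((1 - k / n) * (n * ρ)) f := by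
  rw [show (k / n * (n * ρ) : ℝ) = k * ρ by field_simp,
    show ((1 - k / n) * (n * ρ) : ℝ) = (n - k) * ρ by field_simp, Ffun, if_neg hk0, if_neg hkn]
  rfl

theorem limit_Ffun_atTop_general (n : ℕ) (k : ℕ) (hk : k ≤ n)
    (f : ℝ → ℝ) (hf : ContinuousOn f (Set.Icc 0 1)) :
    Filter.Tendsto (fun ρ : ℝ => Ffun n k ρ f) Filter.atTop
      (nhds (f ((k : ℝ) / (n : ℝ)))) := by
  rcases eq_or_ne k 0 with rfl | hk0
  · simp [Ffun]
  have hn : (n : ℝ) ≠ 0 := Nat.cast_ne_zero.mpr (by omega)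
  rcases eq_or_ne k n with rfl | hkn
  · simp [Ffun, hk0, hn]
  have hx₀ : (k : ℝ) / n ∈ Ioo 0 1 :=
    ⟨by positivity, (div_lt_one (by positivity)).mpr (by exact_mod_cast hk.lt_of_ne hkn)⟩
  simp only [Ffun_eq_betaMean hk0 hkn hn]
  exact (tendsto_betaMean_mul_atTop hx₀ hf).comp
    (tendsto_id.const_mul_atTop (by positivity))

/-- For every `n ≥ 1`, `0 ≤ k ≤ n` and continuous `f : [0,1] → ℝ`,
`lim_{ρ→∞} F_{n,k}^ρ(f) = f(k/n)`. -/
theorem limit_Ffun_atTop (n : ℕ) (hn : 1 ≤ n) (k : ℕ) (hk : k ≤ n)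
    (f : ℝ → ℝ) (hf : ContinuousOn f (Set.Icc 0 1)) :
    Filter.Tendsto (fun ρ : ℝ => Ffun n k ρ f) Filter.atTop
      (nhds (f ((k : ℝ) / (n : ℝ)))) :=
  limit_Ffun_atTop_general n k hk f hf
end

section
/- For every integer n ≥ 1, every ρ > 0, and every continuous function f : [0,1] → ℝ, the coefficient [F_{n,0}^ρ,…,F_{n,n}^ρ; f] of x^n in L_n^ρ f equals ((nρ)^{\overline{n}}/(nρ)^n) · V(0,1/n,…,(n−1)/n,1)^{−1} · D, where x^{\overline{n}} = x(x+1)⋯(x+n−1) is the rising factorial, V(0,1/n,…,1) is the Vandermonde determinant of the nodes 0,1/n,…,(n−1)/n,1, and D is the determinant of the (n+1)×(n+1) matrix whose row indexed by k = 0,…,n is (1, k/n, (k/n)², …, (k/n)^{n−1}, F_{n,k}^ρ(f)). -/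
/-!
On the monomial `x ^ j` the functional `F_{n,k}^ρ` is a ratio of Beta integrals,
`B(kρ + j, (n-k)ρ) / B(kρ, (n-k)ρ) = (kρ)^{rising j} / (nρ)^{rising j}`, and
`(kρ)^{rising j}` is a polynomial of degree `j` in the node `k/n` with leading coefficient
`(nρ)^j`. Hence `k ↦ F_{n,k}^ρ(L)` is the restriction to the nodes `k/n` of a polynomial `Q`
of degree `≤ n` with `Q_n = (nρ)^n / (nρ)^{rising n} · L_n`. Replacing the last column of the
Vandermonde matrix by the values of `Q` multiplies its determinant by `Q_n`, and the
interpolation conditions `F_{n,k}^ρ(L) = F_{n,k}^ρ(f)` turn this column into the last column of `D`.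
-/

open MeasureTheory

open Polynomial

lemma ofReal_betaIntegrand (a b : ℝ) {x : ℝ} (hx : x ∈ Set.Ioc (0 : ℝ) 1) :
    (x : ℂ) ^ ((a : ℂ) - 1) * (1 - (x : ℂ)) ^ ((b : ℂ) - 1)
      = ((x ^ (a - 1) * (1 - x) ^ (b - 1) : ℝ) : ℂ) := by
  rw [Complex.ofReal_mul, Complex.ofReal_cpow hx.1.le, Complex.ofReal_cpow (by linarith [hx.2])]
  push_cast
  ring

lemma betaIntegral_ofReal (a b : ℝ) :
    Complex.betaIntegral a b = betaFn a b := by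
  rw [Complex.betaIntegral, betaFn, ← intervalIntegral.integral_ofReal]
  refine intervalIntegral.integral_congr_ae (Filter.Eventually.of_forall fun x hx => ?_)
  rw [Set.uIoc_of_le zero_le_one] at hx
  exact ofReal_betaIntegrand a b hx

lemma intervalIntegrable_betaIntegrand {a b : ℝ} (ha : 0 < a) (hb : 0 < b) :
    IntervalIntegrable (fun t : ℝ => t ^ (a - 1) * (1 - t) ^ (b - 1)) volume 0 1 := by
  obtain ⟨h0, h1⟩ := Complex.betaIntegral_convergent (u := a) (v := b) (by simpa) (by simpa)
  have hre : IntervalIntegrable (fun x : ℝ =>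
      ((x : ℂ) ^ ((a : ℂ) - 1) * (1 - (x : ℂ)) ^ ((b : ℂ) - 1)).re) volume 0 1 := ⟨h0.re, h1.re⟩
  refine hre.congr fun x hx => ?_
  rw [Set.uIoc_of_le zero_le_one] at hx
  simp only [ofReal_betaIntegrand a b hx, Complex.ofReal_re]

lemma betaFn_eq_Gamma_mul_Gamma_div {a b : ℝ} (ha : 0 < a) (hb : 0 < b) :
    betaFn a b = Real.Gamma a * Real.Gamma b / Real.Gamma (a + b) := by
  have h := Complex.Gamma_mul_Gamma_eq_betaIntegral (s := a) (t := b) (by simpa) (by simpa)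
  rw [betaIntegral_ofReal, ← Complex.ofReal_add, Complex.Gamma_ofReal, Complex.Gamma_ofReal,
    Complex.Gamma_ofReal, ← Complex.ofReal_mul, ← Complex.ofReal_mul, Complex.ofReal_inj] at h
  rw [eq_div_iff (Real.Gamma_pos_of_pos (by linarith)).ne', h, mul_comm]

lemma Real.Gamma_add_nat_eq {x : ℝ} (hx : 0 < x) (j : ℕ) :
    Real.Gamma (x + j) = (ascPochhammer ℝ j).eval x * Real.Gamma x := by
  induction j with
  | zero => simp
  | succ j ih =>
    rw [Nat.cast_succ, ← add_assoc, Real.Gamma_add_one (by positivity), ih,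
      ascPochhammer_succ_eval]
    ring

lemma betaFn_add_nat_div {a b : ℝ} (ha : 0 < a) (hb : 0 < b) (j : ℕ) :
    betaFn (a + j) b / betaFn a b
      = (ascPochhammer ℝ j).eval a / (ascPochhammer ℝ j).eval (a + b) := by
  have hab : 0 < a + b := by linarith
  rw [betaFn_eq_Gamma_mul_Gamma_div (by positivity) hb, betaFn_eq_Gamma_mul_Gamma_div ha hb,
    add_right_comm, Real.Gamma_add_nat_eq ha, Real.Gamma_add_nat_eq hab]
  have := (Real.Gamma_pos_of_pos ha).ne'
  have := (Real.Gamma_pos_of_pos hb).ne'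
  have := (Real.Gamma_pos_of_pos hab).ne'
  have := (ascPochhammer_pos j a ha).ne'
  have := (ascPochhammer_pos j (a + b) hab).ne'
  field_simp

lemma integral_betaIntegrand_mul_pow (a b : ℝ) (j : ℕ) :
    ∫ t in (0 : ℝ)..1, t ^ (a - 1) * (1 - t) ^ (b - 1) * t ^ j = betaFn (a + j) b := by
  refine intervalIntegral.integral_congr_ae (Filter.Eventually.of_forall fun x hx => ?_)
  rw [Set.uIoc_of_le zero_le_one] at hx
  rw [add_sub_right_comm, Real.rpow_add hx.1, Real.rpow_natCast]
  ring

noncomputable def ascPochhammerTransform (c : ℝ) (L : ℝ[X]) : ℝ[X] :=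
  ∑ j ∈ Finset.range (L.natDegree + 1),
    C (L.coeff j / (ascPochhammer ℝ j).eval c) * (ascPochhammer ℝ j).comp (C c * X)

lemma eval_ascPochhammerTransform (c x : ℝ) (L : ℝ[X]) :
    (ascPochhammerTransform c L).eval x = ∑ j ∈ Finset.range (L.natDegree + 1),
      L.coeff j * ((ascPochhammer ℝ j).eval (c * x) / (ascPochhammer ℝ j).eval c) := by
  simp only [ascPochhammerTransform, eval_finsetSum, eval_mul, eval_C, eval_comp, eval_X]
  exact Finset.sum_congr rfl fun j _ => by ring

lemma natDegree_ascPochhammerTransform_le (c : ℝ) (L : ℝ[X]) :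
    (ascPochhammerTransform c L).natDegree ≤ L.natDegree := by
  refine natDegree_sum_le_of_forall_le _ _ fun j hj => (natDegree_C_mul_le _ _).trans ?_
  calc _ ≤ (ascPochhammer ℝ j).natDegree * (C c * X).natDegree := natDegree_comp_le
    _ ≤ j * 1 := Nat.mul_le_mul (ascPochhammer_natDegree ℝ j).le
        ((natDegree_C_mul_le c X).trans natDegree_X_le)
    _ ≤ L.natDegree := by rw [mul_one]; exact Nat.lt_succ_iff.mp (Finset.mem_range.mp hj)

lemma coeff_ascPochhammerTransform {c : ℝ} {L : ℝ[X]} {m : ℕ} (hL : L.natDegree ≤ m) :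
    (ascPochhammerTransform c L).coeff m = L.coeff m / (ascPochhammer ℝ m).eval c * c ^ m := by
  simp only [ascPochhammerTransform, finsetSum_coeff, coeff_C_mul, comp_C_mul_X_coeff]
  rw [Finset.sum_eq_single m]
  · have hm := (monic_ascPochhammer ℝ m).coeff_natDegree
    rw [ascPochhammer_natDegree] at hm
    rw [hm, one_mul]
  · intro j hj hjm
    have hj : j < m := lt_of_le_of_ne ((Nat.lt_succ_iff.mp (Finset.mem_range.mp hj)).trans hL) hjm
    rw [coeff_eq_zero_of_natDegree_lt (p := ascPochhammer ℝ j) (by rwa [ascPochhammer_natDegree]),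
      zero_mul, mul_zero]
  · intro hm
    rw [coeff_eq_zero_of_natDegree_lt (by simpa [Nat.lt_succ_iff] using hm), zero_div, zero_mul]

section Ffun

variable {n k : ℕ} {ρ : ℝ}

lemma Ffun_of_pos_of_lt (hk : 0 < k) (hkn : k < n) (g : ℝ → ℝ) :
    Ffun n k ρ g = (betaFn (k * ρ) ((n - k) * ρ))⁻¹ *
      ∫ t in (0 : ℝ)..1, t ^ ((k : ℝ) * ρ - 1) * (1 - t) ^ (((n : ℝ) - k) * ρ - 1) * g t := by
  simp [Ffun, hk.ne', hkn.ne]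

lemma beta_params_pos (hρ : 0 < ρ) (hk : 0 < k) (hkn : k < n) :
    0 < (k : ℝ) * ρ ∧ 0 < ((n : ℝ) - k) * ρ := by
  have : (k : ℝ) < n := by exact_mod_cast hkn
  constructor <;> apply mul_pos _ hρ
  · exact_mod_cast hk
  · linarith

lemma Ffun_add (hρ : 0 < ρ) (hkn : k ≤ n) {g h : ℝ → ℝ} (hg : ContinuousOn g (Set.Icc 0 1))
    (hh : ContinuousOn h (Set.Icc 0 1)) :
    Ffun n k ρ (fun x => g x + h x) = Ffun n k ρ g + Ffun n k ρ h := by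
  rcases Nat.eq_zero_or_pos k with rfl | hk
  · simp [Ffun]
  rcases hkn.lt_or_eq with hkn | rfl
  · obtain ⟨ha, hb⟩ := beta_params_pos hρ hk hkn
    have hw := intervalIntegrable_betaIntegrand ha hb
    rw [← Set.uIcc_of_le zero_le_one] at hg hh
    simp only [Ffun_of_pos_of_lt hk hkn, ← mul_add,
      ← intervalIntegral.integral_add (hw.mul_continuousOn hg) (hw.mul_continuousOn hh)]
  · simp [Ffun, hk.ne']

lemma Ffun_const_mul (c : ℝ) (g : ℝ → ℝ) :
    Ffun n k ρ (fun x => c * g x) = c * Ffun n k ρ g := by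
  unfold Ffun
  split_ifs
  · rfl
  · rfl
  · simp only [mul_left_comm _ c, intervalIntegral.integral_const_mul]

lemma Ffun_sum (hρ : 0 < ρ) (hkn : k ≤ n) {ι : Type*} (s : Finset ι) (g : ι → ℝ → ℝ)
    (hg : ∀ i ∈ s, ContinuousOn (g i) (Set.Icc 0 1)) :
    Ffun n k ρ (fun x => ∑ i ∈ s, g i x) = ∑ i ∈ s, Ffun n k ρ (g i) := by
  classical
  induction s using Finset.induction_on with
  | empty => simp [Ffun]
  | insert i s hi ih =>
    simp only [Finset.sum_insert hi]
    rw [Ffun_add hρ hkn (hg i (Finset.mem_insert_self i s))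
      (continuousOn_finsetSum s fun j hj => hg j (Finset.mem_insert_of_mem hj)),
      ih fun j hj => hg j (Finset.mem_insert_of_mem hj)]

lemma Ffun_pow (hρ : 0 < ρ) (hkn : k ≤ n) (j : ℕ) :
    Ffun n k ρ (· ^ j) = (ascPochhammer ℝ j).eval (k * ρ) / (ascPochhammer ℝ j).eval (n * ρ) := by
  rcases Nat.eq_zero_or_pos k with rfl | hk
  · rcases eq_or_ne j 0 with rfl | hj <;> simp [Ffun, *]
  rcases hkn.lt_or_eq with hkn | rfl
  · obtain ⟨ha, hb⟩ := beta_params_pos hρ hk hkn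
    rw [Ffun_of_pos_of_lt hk hkn, integral_betaIntegrand_mul_pow, inv_mul_eq_div,
      betaFn_add_nat_div ha hb]
    ring_nf
  · have : 0 < (k : ℝ) * ρ := by positivity
    simp [Ffun, hk.ne', (ascPochhammer_pos j _ this).ne']

lemma Ffun_eval_eq_eval_ascPochhammerTransform (hρ : 0 < ρ) (hkn : k ≤ n) (L : ℝ[X]) :
    Ffun n k ρ (fun x => L.eval x) = (ascPochhammerTransform (n * ρ) L).eval ((k : ℝ) / n) := by
  have hnode : (n : ℝ) * ρ * (k / n) = k * ρ := by
    rcases Nat.eq_zero_or_pos n with rfl | hn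
    · simp [Nat.le_zero.mp hkn]
    · field_simp
  simp only [eval_eq_sum_range (p := L)]
  rw [Ffun_sum hρ hkn _ (fun j x => L.coeff j * x ^ j) fun j _ => by fun_prop,
    eval_ascPochhammerTransform, hnode]
  exact Finset.sum_congr rfl fun j _ => by rw [Ffun_const_mul, Ffun_pow hρ hkn]

end Ffun

lemma Matrix.det_updateCol_last_vandermonde {R : Type*} [CommRing R] {n : ℕ}
    (t : Fin (n + 1) → R) {Q : R[X]} (hQ : Q.natDegree ≤ n) :
    ((Matrix.vandermonde t).updateCol (Fin.last n) fun k => Q.eval (t k)).det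
      = Q.coeff n * (Matrix.vandermonde t).det := by
  have h := Matrix.det_updateCol_sum (Matrix.vandermonde t) (Fin.last n) fun i => Q.coeff i
  simp only [Matrix.vandermonde_apply, smul_eq_mul, Fin.val_last] at h
  rw [← h]
  congr
  funext k
  rw [eval_eq_sum_range' (Nat.lt_succ_of_le hQ),
    ← Fin.sum_univ_eq_sum_range (fun i => Q.coeff i * t k ^ i)]

lemma det_vandermonde_natCast_div_ne_zero (n : ℕ) :
    (Matrix.vandermonde fun i : Fin (n + 1) => (i : ℝ) / n).det ≠ 0 := by
  refine Matrix.det_vandermonde_ne_zero_iff.mpr fun i j h => ?_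
  rcases Nat.eq_zero_or_pos n with rfl | hn
  · exact Fin.ext (by omega)
  · exact Fin.ext (by exact_mod_cast (div_left_inj' (by positivity : (n : ℝ) ≠ 0)).mp h)

theorem coeff_L_eq_det_formula_general (n : ℕ) (ρ : ℝ) (hρ : 0 < ρ) (f : ℝ → ℝ)
    (L : Polynomial ℝ) (hLdeg : L.natDegree ≤ n)
    (hL : ∀ k ≤ n, Ffun n k ρ (fun x => L.eval x) = Ffun n k ρ f) :
    L.coeff n =
      ((ascPochhammer ℝ n).eval ((n : ℝ) * ρ) / ((n : ℝ) * ρ) ^ n) *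
        (Matrix.det (Matrix.vandermonde (fun i : Fin (n + 1) => (i : ℝ) / (n : ℝ))))⁻¹ *
        Matrix.det (Matrix.of (fun k j : Fin (n + 1) =>
          if (j : ℕ) = n then Ffun n (k : ℕ) ρ f else ((k : ℝ) / (n : ℝ)) ^ (j : ℕ))) := by
  set t : Fin (n + 1) → ℝ := fun i => (i : ℝ) / n
  set Q := ascPochhammerTransform (n * ρ) L
  have hM : Matrix.of (fun k j : Fin (n + 1) => if (j : ℕ) = n then Ffun n k ρ f else t k ^ (j : ℕ))
      = (Matrix.vandermonde t).updateCol (Fin.last n) fun k => Q.eval (t k) := by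
    ext k j
    rw [Matrix.of_apply, Matrix.updateCol_apply, Matrix.vandermonde_apply, ← hL k k.is_le,
      Ffun_eval_eq_eval_ascPochhammerTransform hρ k.is_le]
    simp only [Fin.ext_iff, Fin.val_last]
    rfl
  have hscale : (ascPochhammer ℝ n).eval ((n : ℝ) * ρ) ≠ 0 ∧ ((n : ℝ) * ρ) ^ n ≠ 0 := by
    rcases Nat.eq_zero_or_pos n with rfl | hn
    · simp
    · have : 0 < (n : ℝ) * ρ := by positivity
      exact ⟨(ascPochhammer_pos n _ this).ne', pow_ne_zero n this.ne'⟩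
  rw [hM, Matrix.det_updateCol_last_vandermonde t
    ((natDegree_ascPochhammerTransform_le _ L).trans hLdeg), coeff_ascPochhammerTransform hLdeg]
  have hV : (Matrix.vandermonde t).det ≠ 0 := det_vandermonde_natCast_div_ne_zero n
  field_simp [hscale.1, hscale.2]

/-- The coefficient `[F_{n,0}^ρ,…,F_{n,n}^ρ; f]` of `x^n` in `L_n^ρ f` equals
`((nρ)^{rising n}/(nρ)^n) · V(0,1/n,…,1)⁻¹ · D`, where `V` is the Vandermonde
determinant of the nodes `k/n` and `D` is the determinant of the matrix whose
`k`-th row is `(1, k/n, …, (k/n)^{n-1}, F_{n,k}^ρ(f))`. -/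
theorem coeff_L_eq_det_formula (n : ℕ) (hn : 1 ≤ n) (ρ : ℝ) (hρ : 0 < ρ)
    (f : ℝ → ℝ) (hf : ContinuousOn f (Set.Icc 0 1))
    (L : Polynomial ℝ) (hLdeg : L.natDegree ≤ n)
    (hL : ∀ k ≤ n, Ffun n k ρ (fun x => L.eval x) = Ffun n k ρ f) :
    L.coeff n =
      ((ascPochhammer ℝ n).eval ((n : ℝ) * ρ) / ((n : ℝ) * ρ) ^ n) *
        (Matrix.det (Matrix.vandermonde (fun i : Fin (n + 1) => (i : ℝ) / (n : ℝ))))⁻¹ *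
        Matrix.det (Matrix.of (fun k j : Fin (n + 1) =>
          if (j : ℕ) = n then Ffun n (k : ℕ) ρ f else ((k : ℝ) / (n : ℝ)) ^ (j : ℕ))) :=
  coeff_L_eq_det_formula_general n ρ hρ f L hLdeg hL
end
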